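/- Let a, d, k be positive integers with gcd(a,d)=1 and 2 ≤ k ≤ a, let a−1 = q(k−1)+r with 0 ≤ r < k−1, and let λ ∈ ℂ with λ^{d} = 1. Then for every integer ν ≥ 0, Σ_{i=1}^{a−1} λ^{m_i} m_i^{ν} = Σ_{ℓ=0}^{ν} C(ν,ℓ)·(d^ℓ/(ℓ+1))·Σ_{j=0}^{ℓ} C(ℓ+1,j) B_j · ( −λ^{a} a^{ν−ℓ} − Σ_{s=1}^{q} ( λ^{(s+1)a}((s+1)a)^{ν−ℓ} − λ^{sa}(sa)^{ν−ℓ} )·(s(k−1)+1)^{ℓ+1−j} + λ^{(q+1)a}((q+1)a)^{ν−ℓ}·(q(k−1)+r+1)^{ℓ+1−j} ), where m_i is taken with respect to the sequence a, a+d, …, a+(k−1)d. -/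

import Mathlib

open Finset

/-- `n` is representable as a nonnegative integer combination of the `a i`. -/
def Representable {k : ℕ} (a : Fin k → ℕ) (n : ℕ) : Prop :=
  ∃ x : Fin k → ℕ, n = ∑ i, x i * a i

/-!
Since `gcd(a, d) = 1`, the residues `s * d % a` with `1 ≤ s ≤ a - 1` run over all nonzero classes
mod `a`. A representable number is `T * a + S * d` with `S ≤ (k - 1) * T`, so
`m (s * d % a) = (t + 1) * a + s * d` where `t * (k - 1) < s ≤ (t + 1) * (k - 1)`. As `λ ^ d = 1`,
`λ ^ m` only depends on the block index `t`. Expanding `((t + 1) * a + s * d) ^ ν` binomially turns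
the sum into a weighted sum of power sums `∑ s ^ ℓ` over the blocks of `s`; summation by parts over
the blocks and Faulhaber's formula give the Bernoulli expression.
-/

namespace Representable

variable {k : ℕ} {a : Fin k → ℕ} {m n : ℕ}

lemma zero (a : Fin k → ℕ) : Representable a 0 := ⟨0, by simp⟩

lemma add (hm : Representable a m) (hn : Representable a n) : Representable a (m + n) := by
  obtain ⟨x, rfl⟩ := hm
  obtain ⟨y, rfl⟩ := hn
  exact ⟨x + y, by simp only [Pi.add_apply, add_mul, sum_add_distrib]⟩

lemma generator (a : Fin k → ℕ) (i : Fin k) : Representable a (a i) :=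
  ⟨Pi.single i 1, by simp [Pi.single_apply]⟩

end Representable

lemma representable_arith_iff {a d k n : ℕ} (hk : 0 < k) :
    Representable (fun j : Fin k => a + j * d) n ↔ ∃ T S, S ≤ (k - 1) * T ∧ n = T * a + S * d := by
  constructor
  · rintro ⟨x, rfl⟩
    refine ⟨∑ i, x i, ∑ i : Fin k, (i : ℕ) * x i, ?_, ?_⟩
    · rw [mul_sum]
      exact sum_le_sum fun i _ => Nat.mul_le_mul_right _ (by omega)
    · rw [sum_mul, sum_mul, ← sum_add_distrib]
      exact sum_congr rfl fun i _ => by ring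
  · rintro ⟨T, S, hS, rfl⟩
    induction T generalizing S with
    | zero =>
      obtain rfl : S = 0 := by simpa using hS
      simpa using Representable.zero _
    | succ T ih =>
      set v := min S (k - 1)
      have hvS : v ≤ S := min_le_left _ _
      have hsplit : (T + 1) * a + S * d = (a + v * d) + (T * a + (S - v) * d) := by
        zify [hvS]
        ring
      rw [hsplit]
      refine (Representable.generator _ (⟨v, by omega⟩ : Fin k)).add (ih _ ?_)
      rw [Nat.mul_succ] at hS
      omega

lemma mul_mod_mem_Icc {a d s : ℕ} (hgcd : a.gcd d = 1) (hs : s ∈ Icc 1 (a - 1)) :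
    s * d % a ∈ Icc 1 (a - 1) := by
  rw [mem_Icc] at hs ⊢
  refine ⟨Nat.pos_of_ne_zero fun h0 => ?_, by have := Nat.mod_lt (s * d) (by omega : 0 < a); omega⟩
  have hdvd : a ∣ s := Nat.Coprime.dvd_of_dvd_mul_right hgcd (Nat.dvd_of_mod_eq_zero h0)
  have := Nat.le_of_dvd (by omega) hdvd
  omega

lemma isLeast_arith_representable {a d k t s : ℕ} (hk : 0 < k) (hgcd : a.gcd d = 1)
    (hts : t * (k - 1) < s) (hst : s ≤ (t + 1) * (k - 1)) (hsa : s < a) :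
    IsLeast {n : ℕ | 0 < n ∧ Representable (fun j : Fin k => a + j * d) n ∧ n % a = s * d % a}
      ((t + 1) * a + s * d) := by
  refine ⟨⟨Nat.add_pos_left (Nat.mul_pos t.succ_pos (by omega)) _,
    (representable_arith_iff hk).2 ⟨t + 1, s, by linarith, rfl⟩, ?_⟩, ?_⟩
  · rw [add_comm, Nat.add_mul_mod_self_right]
  · rintro n ⟨-, hrep, hmod⟩
    obtain ⟨T, S, hST, rfl⟩ := (representable_arith_iff hk).1 hrep
    have hSs : S % a = s := by
      rw [add_comm, Nat.add_mul_mod_self_right] at hmod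
      rw [Nat.ModEq.cancel_right_of_coprime hgcd hmod, Nat.mod_eq_of_lt hsa]
    have hsS : s ≤ S := hSs ▸ Nat.mod_le S a
    have htT : t + 1 ≤ T := Nat.lt_of_mul_lt_mul_left (a := k - 1) (by linarith)
    show (t + 1) * a + s * d ≤ T * a + S * d
    gcongr

lemma sum_Icc_mul_mod {M : Type*} [AddCommMonoid M] {a d : ℕ} (hgcd : a.gcd d = 1)
    (F : ℕ → M) : ∑ s ∈ Icc 1 (a - 1), F (s * d % a) = ∑ i ∈ Icc 1 (a - 1), F i := by
  have hmaps : Set.MapsTo (fun s => s * d % a) (Icc 1 (a - 1)) (Icc 1 (a - 1)) :=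
    fun _ hs => mul_mod_mem_Icc hgcd hs
  have hinj : Set.InjOn (fun s => s * d % a) (Icc 1 (a - 1)) := by
    intro s₁ h₁ s₂ h₂ h
    simp only [coe_Icc, Set.mem_Icc] at h₁ h₂
    have := Nat.ModEq.cancel_right_of_coprime hgcd h
    rwa [Nat.ModEq, Nat.mod_eq_of_lt (by omega), Nat.mod_eq_of_lt (by omega)] at this
  exact sum_nbij _ hmaps hinj (surjOn_of_injOn_of_card_le _ hmaps hinj le_rfl) fun _ _ => rfl

lemma sum_range_sum_Ico_of_monotone {M : Type*} [AddCommMonoid M] {n : ℕ → ℕ} (hn : Monotone n)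
    (F : ℕ → M) (N : ℕ) :
    ∑ t ∈ range N, ∑ s ∈ Ico (n t) (n (t + 1)), F s = ∑ s ∈ Ico (n 0) (n N), F s := by
  induction N with
  | zero => simp
  | succ N ih =>
    rw [sum_range_succ, ih, sum_Ico_consecutive _ (hn N.zero_le) (hn N.le_succ)]

lemma sum_range_mul_sub {R : Type*} [CommRing R] (C A : ℕ → R) (q : ℕ) :
    ∑ t ∈ range (q + 1), C (t + 1) * (A (t + 1) - A t) =
      C (q + 1) * A (q + 1) - C 1 * A 0 - ∑ t ∈ Icc 1 q, (C (t + 1) - C t) * A t := by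
  induction q with
  | zero => simp [mul_sub]
  | succ q ih =>
    rw [sum_range_succ, ih, ← insert_Icc_right_eq_Icc_add_one (by omega), sum_insert (by simp)]
    ring

lemma sum_range_pow_eq_bernoulli {K : Type*} [Field K] [CharZero K] (n p : ℕ) :
    ∑ s ∈ range n, (s : K) ^ p =
      (∑ j ∈ range (p + 1), ((p + 1).choose j : K) * (bernoulli j : K) * (n : K) ^ (p + 1 - j)) /
        (p + 1) := by
  have h := congrArg (Rat.cast : ℚ → K) (sum_range_pow n p)
  push_cast at h
  rw [h, sum_div]
  exact sum_congr rfl fun j _ => by ring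

lemma pow_mul_cast_pow_eq_sum_of_pow_eq_one {K : Type*} [CommRing K] {lam : K} {d : ℕ}
    (hld : lam ^ d = 1) (A s ν : ℕ) :
    lam ^ (A + s * d) * ((A + s * d : ℕ) : K) ^ ν =
      ∑ l ∈ range (ν + 1),
        (ν.choose l : K) * (d : K) ^ l * (lam ^ A * (A : K) ^ (ν - l)) * (s : K) ^ l := by
  rw [pow_add, mul_comm s d, pow_mul, hld, one_pow, mul_one, Nat.cast_add, add_comm, add_pow,
    mul_sum]
  refine sum_congr rfl fun l _ => ?_
  push_cast
  ring

lemma sum_range_mul_sum_Ico_pow {K : Type*} [Field K] [CharZero K] {n : ℕ → ℕ} (hn : Monotone n)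
    (C : ℕ → K) (q l : ℕ) :
    ∑ t ∈ range (q + 1), C (t + 1) * ∑ s ∈ Ico (n t) (n (t + 1)), (s : K) ^ l =
      (∑ j ∈ range (l + 1), ((l + 1).choose j : K) * (bernoulli j : K) *
        (C (q + 1) * (n (q + 1) : K) ^ (l + 1 - j) - C 1 * (n 0 : K) ^ (l + 1 - j) -
          ∑ t ∈ Icc 1 q, (C (t + 1) - C t) * (n t : K) ^ (l + 1 - j))) / (l + 1) := by
  have hblock : ∀ t, ∑ s ∈ Ico (n t) (n (t + 1)), (s : K) ^ l =
      ∑ s ∈ range (n (t + 1)), (s : K) ^ l - ∑ s ∈ range (n t), (s : K) ^ l :=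
    fun t => sum_Ico_eq_sub _ (hn t.le_succ)
  simp only [hblock]
  rw [sum_range_mul_sub C (fun t => ∑ s ∈ range (n t), (s : K) ^ l)]
  simp only [sum_range_pow_eq_bernoulli, mul_sub, sum_sub_distrib, sub_div, mul_sum, sum_div]
  rw [sum_comm (s := Icc 1 q)]
  refine congrArg₂ _ (congrArg₂ _ ?_ ?_) ?_
  · exact sum_congr rfl fun _ _ => by ring
  · exact sum_congr rfl fun _ _ => by ring
  · exact sum_congr rfl fun _ _ => sum_congr rfl fun _ _ => by ring

/-- Block `t` is `Ico (blockStart a k t) (blockStart a k (t + 1))`: the `s < a` with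
`t * (k - 1) < s ≤ (t + 1) * (k - 1)`. -/
def blockStart (a k t : ℕ) : ℕ := min (t * (k - 1) + 1) a

section Blocks

variable {a k : ℕ}

lemma blockStart_monotone : Monotone (blockStart a k) :=
  fun _ _ h => min_le_min_right a (by gcongr)

lemma blockStart_zero (ha : 0 < a) : blockStart a k 0 = 1 := by
  simp only [blockStart]
  omega

lemma blockStart_of_le {q t : ℕ} (hq : q * (k - 1) + 1 ≤ a) (ht : t ≤ q) :
    blockStart a k t = t * (k - 1) + 1 := by
  have : t * (k - 1) ≤ q * (k - 1) := by gcongr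
  simp only [blockStart]
  omega

lemma blockStart_eq_self {q : ℕ} (hq : a ≤ q * (k - 1) + 1) : blockStart a k q = a :=
  min_eq_right hq

lemma minRepr_eq_of_mem_block {d t s : ℕ} {m : ℕ → ℕ} (hk : 0 < k) (hgcd : a.gcd d = 1)
    (hm : ∀ i ∈ Icc 1 (a - 1), IsLeast {n : ℕ | 0 < n ∧
      Representable (fun j : Fin k => a + (j : ℕ) * d) n ∧ n % a = i} (m i))
    (hs : s ∈ Ico (blockStart a k t) (blockStart a k (t + 1))) :
    m (s * d % a) = (t + 1) * a + s * d := by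
  rw [mem_Ico] at hs
  have hlo : min (t * (k - 1) + 1) a ≤ s := hs.1
  have hhi : s < min ((t + 1) * (k - 1) + 1) a := hs.2
  have hs' : s ∈ Icc 1 (a - 1) := mem_Icc.2 ⟨by omega, by omega⟩
  exact (hm _ (mul_mod_mem_Icc hgcd hs')).unique
    (isLeast_arith_representable hk hgcd (by omega) (by omega) (by omega))

lemma sum_pow_minRepr_eq_sum_blocks {K : Type*} [CommRing K] {d q : ℕ} {m : ℕ → ℕ}
    (ha : 0 < a) (hk : 0 < k) (hgcd : a.gcd d = 1) (hq : a ≤ (q + 1) * (k - 1) + 1)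
    (hm : ∀ i ∈ Icc 1 (a - 1), IsLeast {n : ℕ | 0 < n ∧
      Representable (fun j : Fin k => a + (j : ℕ) * d) n ∧ n % a = i} (m i))
    {lam : K} (hld : lam ^ d = 1) (ν : ℕ) :
    ∑ i ∈ Icc 1 (a - 1), lam ^ m i * (m i : K) ^ ν =
      ∑ l ∈ range (ν + 1), (ν.choose l : K) * (d : K) ^ l *
        ∑ t ∈ range (q + 1), lam ^ ((t + 1) * a) * (((t + 1) * a : ℕ) : K) ^ (ν - l) *
          ∑ s ∈ Ico (blockStart a k t) (blockStart a k (t + 1)), (s : K) ^ l := by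
  calc ∑ i ∈ Icc 1 (a - 1), lam ^ m i * (m i : K) ^ ν
      = ∑ t ∈ range (q + 1), ∑ s ∈ Ico (blockStart a k t) (blockStart a k (t + 1)),
          lam ^ m (s * d % a) * (m (s * d % a) : K) ^ ν := by
        rw [sum_range_sum_Ico_of_monotone blockStart_monotone, blockStart_eq_self hq,
          blockStart_zero ha, ← Icc_sub_one_right_eq_Ico_of_not_isMin (by simpa using ha.ne')]
        exact (sum_Icc_mul_mod hgcd _).symm
    _ = ∑ t ∈ range (q + 1), ∑ s ∈ Ico (blockStart a k t) (blockStart a k (t + 1)),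
          ∑ l ∈ range (ν + 1), (ν.choose l : K) * (d : K) ^ l *
            (lam ^ ((t + 1) * a) * (((t + 1) * a : ℕ) : K) ^ (ν - l)) * (s : K) ^ l := by
        refine sum_congr rfl fun t _ => sum_congr rfl fun s hs => ?_
        rw [minRepr_eq_of_mem_block hk hgcd hm hs, pow_mul_cast_pow_eq_sum_of_pow_eq_one hld]
    _ = _ := by
        simp only [mul_sum]
        rw [sum_comm]
        refine sum_congr rfl fun t _ => ?_
        rw [sum_comm]
        exact sum_congr rfl fun _ _ => sum_congr rfl fun _ _ => by ring

end Blocks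

theorem stmt14_general (a d k q r : ℕ) (ha : 0 < a)
    (hgcd : Nat.gcd a d = 1)
    (hqr : a - 1 = q * (k - 1) + r) (hr : r < k - 1)
    (m : ℕ → ℕ)
    (hm : ∀ i ∈ Finset.Icc 1 (a - 1),
      IsLeast {n : ℕ | 0 < n ∧
        Representable (fun j : Fin k => a + (j : ℕ) * d) n ∧ n % a = i} (m i))
    (lam : ℂ) (hld : lam ^ d = 1) (ν : ℕ) :
    ∑ i ∈ Finset.Icc 1 (a - 1), lam ^ (m i) * (m i : ℂ) ^ ν =
      ∑ l ∈ Finset.range (ν + 1), (ν.choose l : ℂ) * ((d : ℂ) ^ l / ((l : ℂ) + 1)) *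
        ∑ j ∈ Finset.range (l + 1), ((l + 1).choose j : ℂ) * ((bernoulli j : ℚ) : ℂ) *
          ( -(lam ^ a) * (a : ℂ) ^ (ν - l)
            - ∑ s ∈ Finset.Icc 1 q,
                (lam ^ ((s + 1) * a) * (((s + 1) * a : ℕ) : ℂ) ^ (ν - l)
                  - lam ^ (s * a) * ((s * a : ℕ) : ℂ) ^ (ν - l)) *
                  ((s * (k - 1) + 1 : ℕ) : ℂ) ^ (l + 1 - j)
            + lam ^ ((q + 1) * a) * (((q + 1) * a : ℕ) : ℂ) ^ (ν - l) *
                ((q * (k - 1) + r + 1 : ℕ) : ℂ) ^ (l + 1 - j) ) := by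
  have hk : 0 < k := by omega
  have hfull : q * (k - 1) + 1 ≤ a := by omega
  have hcover : a ≤ (q + 1) * (k - 1) + 1 := by rw [add_mul]; omega
  have hlast : blockStart a k (q + 1) = q * (k - 1) + r + 1 := by
    rw [blockStart_eq_self hcover]
    omega
  have hblocks : ∀ (f : ℕ → ℂ) (e : ℕ), ∑ t ∈ Icc 1 q, f t * (blockStart a k t : ℂ) ^ e =
      ∑ t ∈ Icc 1 q, f t * ((t * (k - 1) + 1 : ℕ) : ℂ) ^ e :=
    fun f e => sum_congr rfl fun t ht => by rw [blockStart_of_le hfull (mem_Icc.1 ht).2]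
  rw [sum_pow_minRepr_eq_sum_blocks ha hk hgcd hcover hm hld]
  refine sum_congr rfl fun l _ => ?_
  rw [sum_range_mul_sum_Ico_pow blockStart_monotone
    (fun u => lam ^ (u * a) * ((u * a : ℕ) : ℂ) ^ (ν - l)), sum_div, mul_sum, mul_sum]
  refine sum_congr rfl fun j _ => ?_
  rw [hblocks, hlast, blockStart_zero ha]
  simp only [one_mul, Nat.cast_one, one_pow]
  ring

/-- Weighted power sums of the minimal representatives when `λ^d = 1`. -/
theorem stmt14 (a d k q r : ℕ) (ha : 0 < a) (hd : 0 < d)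
    (hk : 2 ≤ k) (hka : k ≤ a) (hgcd : Nat.gcd a d = 1)
    (hqr : a - 1 = q * (k - 1) + r) (hr : r < k - 1)
    (m : ℕ → ℕ)
    (hm : ∀ i ∈ Finset.Icc 1 (a - 1),
      IsLeast {n : ℕ | 0 < n ∧
        Representable (fun j : Fin k => a + (j : ℕ) * d) n ∧ n % a = i} (m i))
    (lam : ℂ) (hld : lam ^ d = 1) (ν : ℕ) :
    ∑ i ∈ Finset.Icc 1 (a - 1), lam ^ (m i) * (m i : ℂ) ^ ν =
      ∑ l ∈ Finset.range (ν + 1), (ν.choose l : ℂ) * ((d : ℂ) ^ l / ((l : ℂ) + 1)) *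
        ∑ j ∈ Finset.range (l + 1), ((l + 1).choose j : ℂ) * ((bernoulli j : ℚ) : ℂ) *
          ( -(lam ^ a) * (a : ℂ) ^ (ν - l)
            - ∑ s ∈ Finset.Icc 1 q,
                (lam ^ ((s + 1) * a) * (((s + 1) * a : ℕ) : ℂ) ^ (ν - l)
                  - lam ^ (s * a) * ((s * a : ℕ) : ℂ) ^ (ν - l)) *
                  ((s * (k - 1) + 1 : ℕ) : ℂ) ^ (l + 1 - j)
            + lam ^ ((q + 1) * a) * (((q + 1) * a : ℕ) : ℂ) ^ (ν - l) *
                ((q * (k - 1) + r + 1 : ℕ) : ℂ) ^ (l + 1 - j) ) :=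
  stmt14_general a d k q r ha hgcd hqr hr m hm lam hld ν
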